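/- For every real α ∈ (0, 1/2), there exists a sequence of trees T_1', T_2', … with lim_{n→∞} s(T_n')/Δ(T_n') = α. -/

import Mathlib

open Finset

/-- A proper coloring with positive integer colors. -/
def IsProperColoring {V : Type*} (G : SimpleGraph V) (f : V → ℕ) : Prop :=
  (∀ v, 1 ≤ f v) ∧ ∀ ⦃u v⦄, G.Adj u v → f u ≠ f v

/-- The chromatic sum of a graph. -/
noncomputable def chromSum {V : Type*} [Fintype V] (G : SimpleGraph V) : ℕ :=
  sInf {s | ∃ f : V → ℕ, IsProperColoring G f ∧ ∑ v, f v = s}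

/-- The strength: minimum number of distinct colors among minimal colorings. -/
noncomputable def strength {V : Type*} [Fintype V] (G : SimpleGraph V) : ℕ :=
  sInf {n | ∃ f : V → ℕ, IsProperColoring G f ∧ ∑ v, f v = chromSum G ∧
    (Finset.univ.image f).card = n}

namespace TS

mutual
inductive RT : Type where
  | node : ℕ → Forest → RT
  deriving DecidableEq
inductive Forest : Type where
  | nil : Forest
  | cons : RT → Forest → Forest
  deriving DecidableEq
end

namespace RT

def lab : RT → ℕ | .node j _ => j
def chl : RT → Forest | .node _ cs => cs

end RT

mutual
def RT.csum : RT → ℕ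
  | .node j cs => j + cs.fcsum
def Forest.fcsum : Forest → ℕ
  | .nil => 0
  | .cons t fr => t.csum + fr.fcsum
end

def Forest.flen : Forest → ℕ
  | .nil => 0
  | .cons _ fr => fr.flen + 1

def Forest.fget : Forest → ℕ → RT
  | .nil, _ => .node 0 .nil
  | .cons t _, 0 => t
  | .cons _ fr, (m+1) => fr.fget m

mutual
def RT.paths : RT → Finset (List ℕ)
  | .node _ cs => insert [] (cs.fpaths 0)
def Forest.fpaths : Forest → ℕ → Finset (List ℕ)
  | .nil, _ => ∅
  | .cons t fr, i => (t.paths).image (i :: ·) ∪ fr.fpaths (i+1)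
end

def RT.subtree : RT → List ℕ → RT
  | t, [] => t
  | .node _ cs, (i :: l) => (cs.fget i).subtree l

def clab (t : RT) (l : List ℕ) : ℕ := (t.subtree l).lab

@[simp] lemma subtree_nil (t : RT) : t.subtree [] = t := by
  cases t with
  | node j cs => rfl

@[simp] lemma clab_nil (t : RT) : clab t [] = t.lab := by simp [clab]

@[simp] lemma clab_cons (j i : ℕ) (cs : Forest) (l : List ℕ) :
    clab (.node j cs) (i :: l) = clab (cs.fget i) l := rfl

@[simp] lemma nil_mem_paths (t : RT) : [] ∈ t.paths := by
  cases t with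
  | node j cs => simp [RT.paths]

lemma mem_fpaths : ∀ {fr : Forest} {i : ℕ} {v : List ℕ},
    v ∈ fr.fpaths i ↔ ∃ m l, m < fr.flen ∧ l ∈ (fr.fget m).paths ∧ v = (i + m) :: l
  | .nil, i, v => by simp [Forest.fpaths, Forest.flen]
  | .cons t fr, i, v => by
    simp only [Forest.fpaths, Finset.mem_union, Finset.mem_image, mem_fpaths (fr := fr)]
    constructor
    · rintro (⟨l, hl, rfl⟩ | ⟨m, l, hm, hl, rfl⟩)
      · exact ⟨0, l, by simp only [Forest.flen]; omega, by simpa [Forest.fget] using hl, by simp⟩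
      · exact ⟨m+1, l, by simp only [Forest.flen]; omega, by simpa [Forest.fget] using hl, by rw [show i + (m+1) = i + 1 + m by omega]⟩
    · rintro ⟨m, l, hm, hl, rfl⟩
      cases m with
      | zero => exact Or.inl ⟨l, by simpa [Forest.fget] using hl, rfl⟩
      | succ m =>
        exact Or.inr ⟨m, l, by simpa [Forest.flen] using hm, by simpa [Forest.fget] using hl,
          by rw [show i + (m+1) = i + 1 + m by omega]⟩

lemma mem_paths_node {j : ℕ} {cs : Forest} {v : List ℕ} :
    v ∈ (RT.node j cs).paths ↔ v = [] ∨ ∃ m l, m < cs.flen ∧ l ∈ (cs.fget m).paths ∧ v = m :: l := by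
  simp only [RT.paths, Finset.mem_insert, mem_fpaths]
  constructor
  · rintro (rfl | ⟨m, l, h1, h2, rfl⟩)
    · exact Or.inl rfl
    · exact Or.inr ⟨m, l, h1, h2, by simp⟩
  · rintro (rfl | ⟨m, l, h1, h2, rfl⟩)
    · exact Or.inl rfl
    · exact Or.inr ⟨m, l, h1, h2, by simp⟩

lemma cons_mem_paths {j m : ℕ} {cs : Forest} {l : List ℕ} (hm : m < cs.flen)
    (hl : l ∈ (cs.fget m).paths) : (m :: l) ∈ (RT.node j cs).paths :=
  mem_paths_node.2 (Or.inr ⟨m, l, hm, hl, rfl⟩)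

lemma subtree_cons (j : ℕ) (cs : Forest) (m : ℕ) (l : List ℕ) :
    (RT.node j cs).subtree (m :: l) = (cs.fget m).subtree l := rfl

lemma head_ge_of_mem_fpaths {fr : Forest} {i : ℕ} {v : List ℕ} (h : v ∈ fr.fpaths i) :
    ∃ m l, v = (i + m) :: l := by
  obtain ⟨m, l, _, _, rfl⟩ := mem_fpaths.1 h
  exact ⟨m, l, rfl⟩

lemma sum_fpaths_cons (t : RT) (fr : Forest) (i : ℕ) (f : List ℕ → ℕ) :
    ∑ v ∈ (Forest.cons t fr).fpaths i, f v
      = (∑ l ∈ t.paths, f (i :: l)) + ∑ v ∈ fr.fpaths (i+1), f v := by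
  have hdisj : Disjoint ((t.paths).image (i :: ·)) (fr.fpaths (i+1)) := by
    rw [Finset.disjoint_left]
    rintro v hv hv'
    obtain ⟨m, l, rfl⟩ := head_ge_of_mem_fpaths hv'
    simp only [Finset.mem_image] at hv
    obtain ⟨l', _, h⟩ := hv
    injection h with h1 h2
    omega
  rw [show (Forest.cons t fr).fpaths i = (t.paths).image (i :: ·) ∪ fr.fpaths (i+1) from rfl,
    Finset.sum_union hdisj, Finset.sum_image (by intro a _ b _ h; simpa using h)]

lemma sum_paths_node (j : ℕ) (cs : Forest) (f : List ℕ → ℕ) :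
    ∑ v ∈ (RT.node j cs).paths, f v = f [] + ∑ v ∈ cs.fpaths 0, f v := by
  rw [show (RT.node j cs).paths = insert [] (cs.fpaths 0) from rfl, Finset.sum_insert]
  intro h
  obtain ⟨m, l, h⟩ := head_ge_of_mem_fpaths h
  simp at h

/-- sum over forest paths as a sum over children indices -/
lemma sum_fpaths : ∀ (fr : Forest) (i : ℕ) (f : List ℕ → ℕ),
    ∑ v ∈ fr.fpaths i, f v
      = ∑ m ∈ Finset.range fr.flen, ∑ l ∈ (fr.fget m).paths, f ((i + m) :: l)
  | .nil, i, f => by simp [Forest.fpaths, Forest.flen]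
  | .cons t fr, i, f => by
    rw [sum_fpaths_cons, sum_fpaths fr (i+1) f,
      show (Forest.cons t fr).flen = fr.flen + 1 from rfl, Finset.sum_range_succ']
    have h0 : ∑ l ∈ ((Forest.cons t fr).fget 0).paths, f ((i + 0) :: l)
        = ∑ l ∈ t.paths, f (i :: l) := by
      simp [Forest.fget]
    rw [h0, add_comm]
    congr 1
    apply Finset.sum_congr rfl
    intro m _
    rw [show (Forest.cons t fr).fget (m+1) = fr.fget m from rfl]
    apply Finset.sum_congr rfl
    intro l _
    congr 2
    omega

lemma dropLast_mem_paths : ∀ {t : RT} {v : List ℕ}, v ∈ t.paths → v.dropLast ∈ t.paths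
  | .node j cs, v, hv => by
    rcases mem_paths_node.1 hv with rfl | ⟨m, l, hm, hl, rfl⟩
    · simp
    · cases l with
      | nil => simp
      | cons a l' =>
        have h1 : (a :: l').dropLast ∈ (cs.fget m).paths := dropLast_mem_paths hl
        have h2 : (m :: a :: l').dropLast = m :: (a :: l').dropLast :=
          List.dropLast_cons_of_ne_nil (by simp)
        rw [h2]
        exact cons_mem_paths hm h1

/-- properness of a (total) labelling on the paths of `t` -/
def POn (t : RT) (f : List ℕ → ℕ) : Prop :=
  (∀ v ∈ t.paths, 1 ≤ f v) ∧ (∀ v ∈ t.paths, v ≠ [] → f v ≠ f v.dropLast)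

lemma POn_child {j : ℕ} {cs : Forest} {f : List ℕ → ℕ} (h : POn (.node j cs) f)
    {m : ℕ} (hm : m < cs.flen) : POn (cs.fget m) (fun l => f (m :: l)) := by
  constructor
  · intro v hv
    exact h.1 _ (cons_mem_paths hm hv)
  · intro v hv hne
    have h1 : (m :: v) ∈ (RT.node j cs).paths := cons_mem_paths hm hv
    have h2 := h.2 _ h1 (by simp)
    rwa [List.dropLast_cons_of_ne_nil hne] at h2

lemma POn_child_root {j : ℕ} {cs : Forest} {f : List ℕ → ℕ} (h : POn (.node j cs) f)
    {m : ℕ} (hm : m < cs.flen) : f [m] ≠ f [] := by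
  have h1 : [m] ∈ (RT.node j cs).paths := cons_mem_paths hm (nil_mem_paths _)
  simpa using h.2 _ h1 (by simp)

/-- the construction -/
def mid (c σ : ℕ) : ℕ := c + (σ - c + 1) / 2

def build (g : ℕ → ℕ → RT) (j σ : ℕ) : ℕ → Forest
  | 0 => if j + 2 ≤ σ then .cons (g (σ-1) σ) .nil else .nil
  | (n+1) => if n+1 = j then build g j σ n
      else .cons (g (n+1) (mid (n+1) σ)) (.cons (g (n+1) (mid (n+1) σ)) (build g j σ n))

def A : ℕ → ℕ → ℕ → RT
  | 0, j, _ => .node j .nil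
  | (F+1), j, σ => .node j (build (A F) j σ (σ - 2))

/-- the specification of the subtrees of the construction -/
structure Spec (t : RT) (j σ : ℕ) : Prop where
  hj : 1 ≤ j
  hjσ : j < σ
  lab_eq : t.lab = j
  canon_proper : POn t (clab t)
  canon_sum : ∑ v ∈ t.paths, clab t v = t.csum
  lab_range : ∀ v ∈ t.paths, 1 ≤ clab t v ∧ clab t v ≤ σ - 1
  arity_le : ∀ v ∈ t.paths, ((t.subtree v).chl).flen ≤ 2*σ - 3
  low1 : ∀ f, POn t f → t.csum + f [] ≤ (∑ v ∈ t.paths, f v) + j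
  low2 : ∀ f, POn t f → f [] ≠ j → t.csum + σ ≤ (∑ v ∈ t.paths, f v) + j

lemma Spec.low0 {t : RT} {j σ : ℕ} (S : Spec t j σ) {f : List ℕ → ℕ} (hf : POn t f) :
    t.csum ≤ ∑ v ∈ t.paths, f v := by
  by_cases h : f [] = j
  · have := S.low1 f hf
    omega
  · have := S.low2 f hf h
    have := S.hjσ
    omega

def PFor (fr : Forest) (i : ℕ) (f : List ℕ → ℕ) : Prop :=
  ∀ m, m < fr.flen → POn (fr.fget m) (fun l => f ((i+m) :: l))

lemma PFor_cons {t : RT} {fr : Forest} {i : ℕ} {f : List ℕ → ℕ}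
    (h : PFor (.cons t fr) i f) :
    POn t (fun l => f (i :: l)) ∧ PFor fr (i+1) f := by
  constructor
  · have := h 0 (by simp [Forest.flen])
    simpa [Forest.fget] using this
  · intro m hm
    have := h (m+1) (by simp only [Forest.flen]; omega)
    simpa [Forest.fget, show i+(m+1) = (i+1)+m by omega] using this

lemma PFor_of_POn {j : ℕ} {cs : Forest} {f : List ℕ → ℕ} (h : POn (.node j cs) f) :
    PFor cs 0 f := by
  intro m hm
  simpa using POn_child h hm

/-- generic forest lower bound -/
lemma GF1 : ∀ {fr : Forest}, (∀ m, m < fr.flen → ∃ c σc, Spec (fr.fget m) c σc) →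
    ∀ {i : ℕ} {f : List ℕ → ℕ}, PFor fr i f → fr.fcsum ≤ ∑ v ∈ fr.fpaths i, f v
  | .nil, _, i, f, _ => by simp [Forest.fpaths, Forest.fcsum]
  | .cons t fr, hS, i, f, hP => by
    obtain ⟨h1, h2⟩ := PFor_cons hP
    obtain ⟨c, σc, S⟩ := hS 0 (by simp [Forest.flen])
    rw [sum_fpaths_cons]
    have ht : t.csum ≤ ∑ l ∈ t.paths, f (i :: l) := by
      have := (show Spec t c σc by simpa [Forest.fget] using S).low0 h1
      simpa using this
    have hrec : fr.fcsum ≤ ∑ v ∈ fr.fpaths (i+1), f v := by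
      apply GF1 (fun m hm => ?_) h2
      have := hS (m+1) (by simp only [Forest.flen]; omega)
      simpa [Forest.fget] using this
    show t.csum + fr.fcsum ≤ _
    omega

/-- generic forest canonical sum -/
lemma GF3 : ∀ {fr : Forest}, (∀ m, m < fr.flen → ∃ c σc, Spec (fr.fget m) c σc) →
    ∀ {i : ℕ} {f : List ℕ → ℕ},
    (∀ m, m < fr.flen → ∀ l ∈ (fr.fget m).paths, f ((i+m) :: l) = clab (fr.fget m) l) →
    ∑ v ∈ fr.fpaths i, f v = fr.fcsum
  | .nil, _, i, f, _ => by simp [Forest.fpaths, Forest.fcsum]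
  | .cons t fr, hS, i, f, hc => by
    rw [sum_fpaths_cons]
    obtain ⟨c, σc, S⟩ := hS 0 (by simp [Forest.flen])
    have S' : Spec t c σc := by simpa [Forest.fget] using S
    have ht : ∑ l ∈ t.paths, f (i :: l) = t.csum := by
      rw [← S'.canon_sum]
      apply Finset.sum_congr rfl
      intro l hl
      have := hc 0 (by simp [Forest.flen]) l (by simpa [Forest.fget] using hl)
      simpa [Forest.fget] using this
    have hrec : ∑ v ∈ fr.fpaths (i+1), f v = fr.fcsum := by
      apply GF3 (fun m hm => ?_) (fun m hm l hl => ?_)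
      · have := hS (m+1) (by simp only [Forest.flen]; omega)
        simpa [Forest.fget] using this
      · have := hc (m+1) (by simp only [Forest.flen]; omega) l
          (by simpa [Forest.fget] using hl)
        simpa [Forest.fget, show i+(m+1) = (i+1)+m by omega] using this
    show _ = t.csum + fr.fcsum
    omega

lemma mid_le {c σ : ℕ} (h1 : 1 ≤ c) (h2 : c ≤ σ - 2) : mid c σ ≤ σ := by
  unfold mid; omega

def Cov (j σ n c : ℕ) : Prop := (1 ≤ c ∧ c ≤ n ∧ c ≠ j) ∨ (c = σ - 1 ∧ j + 2 ≤ σ)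

section Build

variable {g : ℕ → ℕ → RT} {j σ : ℕ}
  (HG1 : ∀ c, 1 ≤ c → c ≤ σ - 2 → Spec (g c (mid c σ)) c (mid c σ))
  (HG2 : j + 2 ≤ σ → Spec (g (σ-1) σ) (σ-1) σ)
  (hj : 1 ≤ j) (hjσ : j < σ)

include HG1 HG2 hj hjσ in
lemma build_F0 : ∀ n, n ≤ σ - 2 → ∀ m, m < (build g j σ n).flen →
    ∃ c σc, Spec ((build g j σ n).fget m) c σc ∧ c ≠ j ∧ σc ≤ σ := by
  intro n
  induction n with
  | zero =>
    intro _ m hm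
    by_cases h : j + 2 ≤ σ
    · simp only [build, if_pos h] at hm ⊢
      simp only [Forest.flen] at hm
      interval_cases m
      · exact ⟨σ-1, σ, by simpa [Forest.fget] using HG2 h, by omega, le_refl _⟩
    · simp only [build, if_neg h, Forest.flen] at hm
      omega
  | succ n ih =>
    intro hn m hm
    by_cases h : n + 1 = j
    · simp only [build, if_pos h] at hm ⊢
      exact ih (by omega) m hm
    · simp only [build, if_neg h] at hm ⊢
      have hS : Spec (g (n+1) (mid (n+1) σ)) (n+1) (mid (n+1) σ) :=
        HG1 (n+1) (by omega) (by omega)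
      have hle : mid (n+1) σ ≤ σ := mid_le (by omega) (by omega)
      match m with
      | 0 => exact ⟨n+1, mid (n+1) σ, by simpa [Forest.fget] using hS, h, hle⟩
      | 1 => exact ⟨n+1, mid (n+1) σ, by simpa [Forest.fget] using hS, h, hle⟩
      | (m+2) =>
        simp only [Forest.flen] at hm
        have := ih (by omega) m (by omega)
        simpa [Forest.fget] using this

include HG1 HG2 hj hjσ in
lemma build_F2 : ∀ n, n ≤ σ - 2 → ∀ c', Cov j σ n c' →
    ∀ i (f : List ℕ → ℕ), PFor (build g j σ n) i f →
    (∀ m, m < (build g j σ n).flen → f ((i+m) :: []) ≠ c') →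
    (build g j σ n).fcsum + σ ≤ (∑ v ∈ (build g j σ n).fpaths i, f v) + c' := by
  intro n
  induction n with
  | zero =>
    intro _ c' hcov i f hP hroot
    have hc' : c' = σ - 1 ∧ j + 2 ≤ σ := by
      rcases hcov with h | h
      · omega
      · exact h
    obtain ⟨rfl, h2⟩ := hc'
    have S := HG2 h2
    simp only [build, if_pos h2] at hP hroot ⊢
    rw [sum_fpaths_cons]
    have hPt := (PFor_cons hP).1
    have hr : f (i :: []) ≠ σ - 1 := by
      simpa using hroot 0 (by simp [Forest.flen])
    have := S.low2 _ hPt (by simpa using hr)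
    simp only [Forest.fcsum, Forest.fpaths]
    simp only [Finset.sum_empty]
    omega
  | succ n ih =>
    intro hn c' hcov i f hP hroot
    by_cases h : n + 1 = j
    · simp only [build, if_pos h] at hP hroot ⊢
      apply ih (by omega) c' ?_ i f hP hroot
      rcases hcov with hc | hc
      · exact Or.inl ⟨hc.1, by omega, hc.2.2⟩
      · exact Or.inr hc
    · simp only [build, if_neg h] at hP hroot ⊢
      have hS : Spec (g (n+1) (mid (n+1) σ)) (n+1) (mid (n+1) σ) :=
        HG1 (n+1) (by omega) (by omega)
      obtain ⟨hPt, hP'⟩ := PFor_cons hP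
      obtain ⟨hPt2, hP''⟩ := PFor_cons hP'
      have hPt2' : POn (g (n+1) (mid (n+1) σ)) (fun l => f ((i+1) :: l)) := hPt2
      rw [sum_fpaths_cons, sum_fpaths_cons]
      have hbase2 : (build g j σ n).fcsum ≤ ∑ v ∈ (build g j σ n).fpaths (i+1+1), f v :=
        GF1 (fun m hm => ((build_F0 HG1 HG2 hj hjσ n (by omega) m hm).imp (fun c h => h.imp (fun sc h => h.1)))) hP''
      show (g (n+1) (mid (n+1) σ)).csum + ((g (n+1) (mid (n+1) σ)).csum + (build g j σ n).fcsum) + σ ≤ _ + c'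
      by_cases hc : c' = n + 1
      · subst hc
        have hr0 : f (i :: []) ≠ n+1 := by simpa using hroot 0 (by simp [Forest.flen])
        have hr1 : f ((i+1) :: []) ≠ n+1 := by
          have := hroot 1 (by simp [Forest.flen])
          simpa [show i+1 = i+1 by rfl] using this
        have l1 := hS.low2 _ hPt (by simpa using hr0)
        have l2 := hS.low2 _ hPt2' (by simpa using hr1)
        have hmid : (n+1) + σ ≤ 2 * mid (n+1) σ := by unfold mid; omega
        omega
      · have hcov' : Cov j σ n c' := by
          rcases hcov with hcc | hcc
          · exact Or.inl ⟨hcc.1, by omega, hcc.2.2⟩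
          · exact Or.inr hcc
        have hroot' : ∀ m, m < (build g j σ n).flen → f ((i+1+1+m) :: []) ≠ c' := by
          intro m hm
          have := hroot (m+2) (by simp only [Forest.flen]; omega)
          simpa [show i+(m+2) = i+1+1+m by omega] using this
        have hrec := ih (by omega) c' hcov' (i+1+1) f hP'' hroot'
        have l1 := hS.low0 hPt
        have l2 := hS.low0 hPt2'
        omega

end Build

lemma flen_build_le (g : ℕ → ℕ → RT) (j σ : ℕ) : ∀ n, (build g j σ n).flen ≤ 2*n + 1
  | 0 => by
    by_cases h : j + 2 ≤ σ <;> simp [build, h, Forest.flen]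
  | (n+1) => by
    by_cases h : n+1 = j
    · simp only [build, if_pos h]
      have := flen_build_le g j σ n
      omega
    · simp only [build, if_neg h, Forest.flen]
      have := flen_build_le g j σ n
      omega


section NodeParts

variable {j σ : ℕ} {cs : Forest}

def HF0p (j σ : ℕ) (cs : Forest) : Prop :=
  ∀ m, m < cs.flen → ∃ c σc, Spec (cs.fget m) c σc ∧ c ≠ j ∧ σc ≤ σ

def HF2p (j σ : ℕ) (cs : Forest) : Prop :=
  ∀ c', 1 ≤ c' → c' ≤ σ - 1 → c' ≠ j → ∀ i (f : List ℕ → ℕ), PFor cs i f →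
      (∀ m, m < cs.flen → f ((i+m) :: []) ≠ c') →
      cs.fcsum + σ ≤ (∑ v ∈ cs.fpaths i, f v) + c'

variable (hj : 1 ≤ j) (hjσ : j < σ) (HF0 : HF0p j σ cs) (HF2 : HF2p j σ cs)

include HF0 in
lemma node_specs : ∀ m, m < cs.flen → ∃ c σc, Spec (cs.fget m) c σc :=
  fun m hm => ((HF0 m hm).imp (fun c h => h.imp (fun sc h => h.1)))

include hj hjσ HF0 in
lemma node_labrange : ∀ v ∈ (RT.node j cs).paths,
    1 ≤ clab (RT.node j cs) v ∧ clab (RT.node j cs) v ≤ σ - 1 := by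
  intro v hv
  rcases mem_paths_node.1 hv with rfl | ⟨m, l, hm, hl, rfl⟩
  · simp only [clab_nil]
    show 1 ≤ j ∧ j ≤ σ - 1
    omega
  · obtain ⟨c, σc, S, hcj, hσc⟩ := HF0 m hm
    have := S.lab_range l hl
    have h2 := S.hjσ
    rw [clab_cons]
    omega

include hj hjσ HF0 in
lemma node_proper : POn (RT.node j cs) (clab (RT.node j cs)) := by
  constructor
  · intro v hv
    exact (node_labrange hj hjσ HF0 v hv).1
  · intro v hv hne
    rcases mem_paths_node.1 hv with rfl | ⟨m, l, hm, hl, rfl⟩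
    · exact absurd rfl hne
    · obtain ⟨c, σc, S, hcj, hσc⟩ := HF0 m hm
      cases l with
      | nil =>
        simp only [clab_cons, List.dropLast_singleton, clab_nil]
        rw [S.lab_eq]
        show c ≠ j
        exact hcj
      | cons a l' =>
        rw [List.dropLast_cons_of_ne_nil (by simp), clab_cons, clab_cons]
        exact S.canon_proper.2 (a :: l') hl (by simp)

include HF0 in
lemma node_canonsum :
    ∑ v ∈ (RT.node j cs).paths, clab (RT.node j cs) v = (RT.node j cs).csum := by
  rw [sum_paths_node, clab_nil]
  show j + _ = j + cs.fcsum
  congr 1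
  apply GF3 (node_specs HF0)
  intro m hm l hl
  rw [show (0 + m) = m by omega, clab_cons]

include HF0 in
lemma node_low1 : ∀ f, POn (RT.node j cs) f →
    (RT.node j cs).csum + f [] ≤ (∑ v ∈ (RT.node j cs).paths, f v) + j := by
  intro f hf
  rw [sum_paths_node]
  have := GF1 (node_specs HF0) (PFor_of_POn hf)
  show j + cs.fcsum + f [] ≤ _
  omega

include hj hjσ HF0 HF2 in
lemma node_low2 : ∀ f, POn (RT.node j cs) f → f [] ≠ j →
    (RT.node j cs).csum + σ ≤ (∑ v ∈ (RT.node j cs).paths, f v) + j := by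
  intro f hf hne
  rw [sum_paths_node]
  have hpos : 1 ≤ f [] := hf.1 [] (nil_mem_paths _)
  by_cases hbig : σ ≤ f []
  · have := GF1 (node_specs HF0) (PFor_of_POn hf)
    show j + cs.fcsum + σ ≤ _
    omega
  · have hroot : ∀ m, m < cs.flen → f ((0+m) :: []) ≠ f [] := by
      intro m hm
      rw [show (0+m) = m by omega]
      exact POn_child_root hf hm
    have := HF2 (f []) hpos (by omega) hne 0 f (PFor_of_POn hf) hroot
    show j + cs.fcsum + σ ≤ _
    omega

include hj hjσ HF0 in
lemma node_arity_nonroot : ∀ v ∈ (RT.node j cs).paths, v ≠ [] →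
    (((RT.node j cs).subtree v).chl).flen ≤ 2*σ - 3 := by
  intro v hv hne
  rcases mem_paths_node.1 hv with rfl | ⟨m, l, hm, hl, rfl⟩
  · exact absurd rfl hne
  · obtain ⟨c, σc, S, hcj, hσc⟩ := HF0 m hm
    rw [subtree_cons]
    have := S.arity_le l hl
    omega

include hj hjσ HF0 HF2 in
lemma spec_node (harity : cs.flen ≤ 2*σ - 3) : Spec (RT.node j cs) j σ := by
  refine ⟨hj, hjσ, rfl, node_proper hj hjσ HF0, node_canonsum HF0,
    node_labrange hj hjσ HF0, ?_, node_low1 HF0, node_low2 hj hjσ HF0 HF2⟩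
  intro v hv
  by_cases hne : v = []
  · subst hne
    simpa [RT.chl] using harity
  · exact node_arity_nonroot hj hjσ HF0 v hv hne

include hjσ HF2 in
/-- colors are forced in minimum-sum colorings -/
lemma node_forced
    (hlow2 : ∀ f, POn (RT.node j cs) f → f [] ≠ j →
      (RT.node j cs).csum + σ ≤ (∑ v ∈ (RT.node j cs).paths, f v) + j)
    {f : List ℕ → ℕ} (hf : POn (RT.node j cs) f)
    (hopt : ∑ v ∈ (RT.node j cs).paths, f v = (RT.node j cs).csum) :
    f [] = j ∧ ∀ c', 1 ≤ c' → c' ≤ σ - 1 → c' ≠ j →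
      ∃ m, m < cs.flen ∧ f ([m]) = c' := by
  have hroot : f [] = j := by
    by_contra hne
    have := hlow2 f hf hne
    rw [hopt] at this
    omega
  refine ⟨hroot, ?_⟩
  intro c' h1 h2 h3
  by_contra hno
  push_neg at hno
  have hroot' : ∀ m, m < cs.flen → f ((0+m) :: []) ≠ c' := by
    intro m hm
    rw [show (0+m) = m by omega]
    exact hno m hm
  have := HF2 c' h1 h2 h3 0 f (PFor_of_POn hf) hroot'
  rw [sum_paths_node, hroot] at hopt
  have hcs : (RT.node j cs).csum = j + cs.fcsum := rfl
  omega

end NodeParts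

/-- the main induction: the construction satisfies its Spec -/
theorem specA : ∀ F j σ, 1 ≤ j → j < σ → 3*σ ≤ F + j + 5 → Spec (A F j σ) j σ := by
  intro F
  induction F with
  | zero =>
    intro j σ h1 h2 h3
    have hσ : σ = 2 ∧ j = 1 := by omega
    obtain ⟨rfl, rfl⟩ := hσ
    show Spec (RT.node 1 .nil) 1 2
    apply spec_node (by omega) (by omega) ?_ ?_ ?_
    · intro m hm
      simp [Forest.flen] at hm
    · intro c' hc1 hc2 hc3
      omega
    · simp [Forest.flen]
  | succ F ih =>
    intro j σ h1 h2 h3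
    have HG1 : ∀ c, 1 ≤ c → c ≤ σ - 2 → Spec (A F c (mid c σ)) c (mid c σ) := by
      intro c hc1 hc2
      apply ih c (mid c σ) hc1 (by unfold mid; omega) (by unfold mid; omega)
    have HG2 : j + 2 ≤ σ → Spec (A F (σ-1) σ) (σ-1) σ := by
      intro hg
      apply ih (σ-1) σ (by omega) (by omega) (by omega)
    show Spec (RT.node j (build (A F) j σ (σ - 2))) j σ
    apply spec_node h1 h2 ?_ ?_ ?_
    · exact build_F0 HG1 HG2 h1 h2 (σ-2) le_rfl
    · intro c' hc1 hc2 hc3 i f hP hroot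
      apply build_F2 HG1 HG2 h1 h2 (σ-2) le_rfl c' ?_ i f hP hroot
      by_cases hc : c' ≤ σ - 2
      · exact Or.inl ⟨hc1, hc, hc3⟩
      · exact Or.inr ⟨by omega, by omega⟩
    · have := flen_build_le (A F) j σ (σ-2)
      omega

def leaf1 : RT := .node 1 .nil

lemma spec_leaf1 : Spec leaf1 1 2 := specA 0 1 2 (by omega) (by omega) (by omega)

def pads : ℕ → Forest → Forest
  | 0, fr => fr
  | (D+1), fr => .cons leaf1 (pads D fr)

@[simp] lemma paths_leaf1 : leaf1.paths = {[]} := rfl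
@[simp] lemma csum_leaf1 : leaf1.csum = 1 := rfl

lemma pads_flen (fr : Forest) : ∀ D, (pads D fr).flen = D + fr.flen
  | 0 => by simp [pads]
  | (D+1) => by
    show (pads D fr).flen + 1 = _
    rw [pads_flen fr D]; omega

lemma pads_fcsum (fr : Forest) : ∀ D, (pads D fr).fcsum = D + fr.fcsum
  | 0 => by simp [pads]
  | (D+1) => by
    show leaf1.csum + (pads D fr).fcsum = _
    rw [pads_fcsum fr D, csum_leaf1]; omega

lemma pads_HF0 {j σ : ℕ} {fr : Forest} (hj : 2 ≤ j) (hσ : 2 ≤ σ) (H : HF0p j σ fr) :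
    ∀ D, HF0p j σ (pads D fr)
  | 0 => by simpa [pads] using H
  | (D+1) => by
    intro m hm
    match m with
    | 0 => exact ⟨1, 2, by simpa [Forest.fget, pads] using spec_leaf1, by omega, by omega⟩
    | (m+1) =>
      have hm' : m < (pads D fr).flen := by
        rw [pads_flen] at hm
        rw [pads_flen]
        omega
      have := pads_HF0 hj hσ H D m hm'
      simpa [pads, Forest.fget] using this

lemma pads_HF2 {j σ : ℕ} {fr : Forest} (H : HF2p j σ fr) : ∀ D, HF2p j σ (pads D fr)
  | 0 => by simpa [pads] using H
  | (D+1) => by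
    intro c' h1 h2 h3 i f hP hroot
    have hP' := PFor_cons (t := leaf1) (fr := pads D fr) (i := i) (f := f) (by exact hP)
    have hpos : 1 ≤ f (i :: []) := hP'.1.1 [] (by simp)
    have hroot' : ∀ m, m < (pads D fr).flen → f ((i+1+m) :: []) ≠ c' := by
      intro m hm
      have := hroot (m+1) (by show m + 1 < (pads D fr).flen + 1; omega)
      simpa [show i+(m+1) = i+1+m by omega] using this
    have hrec := pads_HF2 H D c' h1 h2 h3 (i+1) f hP'.2 hroot'
    show (Forest.cons leaf1 (pads D fr)).fcsum + σ ≤ ∑ v ∈ (Forest.cons leaf1 (pads D fr)).fpaths i, f v + c'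
    rw [sum_fpaths_cons]
    show leaf1.csum + (pads D fr).fcsum + σ ≤ _
    rw [csum_leaf1]
    simp only [paths_leaf1, Finset.sum_singleton]
    omega

lemma flen_build_eq (g : ℕ → ℕ → RT) {j σ : ℕ} (hj2 : ¬ (j + 2 ≤ σ)) :
    ∀ n, n < j → (build g j σ n).flen = 2*n
  | 0, _ => by simp [build, hj2, Forest.flen]
  | (n+1), h => by
    simp only [build, if_neg (by omega : ¬ (n+1 = j)), Forest.flen]
    rw [flen_build_eq g hj2 n (by omega)]
    omega

/-! ### the top padded tree -/

def bldF (k : ℕ) : Forest := build (A (3*(k+1))) k (k+1) (k-1)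
def topF (k D : ℕ) : Forest := pads D (bldF k)
def top (k D : ℕ) : RT := .node k (topF k D)

section Top

variable {k D : ℕ} (hk : 2 ≤ k)

include hk in
lemma top_HG1 : ∀ c, 1 ≤ c → c ≤ (k+1) - 2 →
    Spec (A (3*(k+1)) c (mid c (k+1))) c (mid c (k+1)) := by
  intro c h1 h2
  have hle : mid c (k+1) ≤ k+1 := mid_le h1 h2
  exact specA _ c _ h1 (by unfold mid; omega) (by omega)

include hk in
lemma top_HF0 : HF0p k (k+1) (topF k D) := by
  apply pads_HF0 hk (by omega)
  exact build_F0 (top_HG1 hk) (fun h => absurd h (by omega)) (by omega) (by omega) (k-1) (by omega)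

include hk in
lemma top_HF2 : HF2p k (k+1) (topF k D) := by
  apply pads_HF2
  intro c' h1 h2 h3 i f hP hroot
  apply build_F2 (top_HG1 hk) (fun h => absurd h (by omega)) (by omega) (by omega) (k-1)
    (by omega) c' ?_ i f hP hroot
  exact Or.inl ⟨h1, by omega, h3⟩

include hk in
lemma top_flen : (topF k D).flen = D + 2*(k-1) := by
  rw [topF, pads_flen, bldF, flen_build_eq _ (by omega) (k-1) (by omega)]

include hk in
lemma top_proper : POn (top k D) (clab (top k D)) :=
  node_proper (by omega) (by omega) (top_HF0 hk)

include hk in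
lemma top_canonsum : ∑ v ∈ (top k D).paths, clab (top k D) v = (top k D).csum :=
  node_canonsum (top_HF0 hk)

include hk in
lemma top_labrange : ∀ v ∈ (top k D).paths, 1 ≤ clab (top k D) v ∧ clab (top k D) v ≤ k :=
  by
  have := node_labrange (cs := topF k D) (by omega) (by omega : k < k+1) (top_HF0 hk)
  simpa [top] using this

include hk in
lemma top_low0 : ∀ f, POn (top k D) f → (top k D).csum ≤ ∑ v ∈ (top k D).paths, f v := by
  intro f hf
  simp only [top] at hf ⊢
  by_cases h : f [] = k
  · have := node_low1 (top_HF0 hk) f hf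
    omega
  · have := node_low2 (by omega) (by omega : k < k+1) (top_HF0 hk) (top_HF2 hk) f hf h
    omega

include hk in
lemma top_forced {f : List ℕ → ℕ} (hf : POn (top k D) f)
    (hopt : ∑ v ∈ (top k D).paths, f v = (top k D).csum) :
    f [] = k ∧ ∀ c', 1 ≤ c' → c' ≤ k → c' ≠ k →
      ∃ m, m < (topF k D).flen ∧ f ([m]) = c' := by
  have h := node_forced (by omega : k < k+1) (top_HF2 hk)
    (node_low2 (by omega) (by omega : k < k+1) (top_HF0 hk) (top_HF2 hk)) hf hopt
  exact ⟨h.1, fun c' h1 h2 h3 => h.2 c' h1 (by omega) h3⟩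

include hk in
lemma top_arity_nonroot : ∀ v ∈ (top k D).paths, v ≠ [] →
    (((top k D).subtree v).chl).flen ≤ 2*k - 1 := by
  intro v hv hne
  simp only [top] at hv ⊢
  have := node_arity_nonroot (by omega) (by omega : k < k+1) (top_HF0 hk) v hv hne
  omega

end Top

/-! ### the graph of a rose tree -/

lemma cons_mem_paths_iff {j m : ℕ} {cs : Forest} {l : List ℕ} :
    (m :: l) ∈ (RT.node j cs).paths ↔ m < cs.flen ∧ l ∈ (cs.fget m).paths := by
  constructor
  · intro h
    rcases mem_paths_node.1 h with h' | ⟨m', l', hm, hl, he⟩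
    · simp at h'
    · rw [List.cons.injEq] at he
      obtain ⟨rfl, rfl⟩ := he
      exact ⟨hm, hl⟩
  · rintro ⟨hm, hl⟩
    exact cons_mem_paths hm hl

lemma append_mem_paths_iff {i : ℕ} : ∀ {v : List ℕ} {t : RT}, v ∈ t.paths →
    ((v ++ [i]) ∈ t.paths ↔ i < ((t.subtree v).chl).flen) := by
  intro v
  induction v with
  | nil =>
    intro t _
    cases t with
    | node j cs =>
      show [i] ∈ (RT.node j cs).paths ↔ i < ((RT.node j cs).subtree []).chl.flen
      rw [subtree_nil]
      show _ ↔ i < cs.flen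
      rw [cons_mem_paths_iff]
      simp
  | cons m v' ih =>
    intro t hv
    cases t with
    | node j cs =>
      obtain ⟨hm, hl⟩ := cons_mem_paths_iff.1 hv
      show (m :: (v' ++ [i])) ∈ _ ↔ _
      rw [cons_mem_paths_iff, subtree_cons, ih hl]
      simp [hm]

def GT (t : RT) : SimpleGraph {l : List ℕ // l ∈ t.paths} where
  Adj u v := (u.1 = v.1.dropLast ∧ v.1 ≠ []) ∨ (v.1 = u.1.dropLast ∧ u.1 ≠ [])
  symm := by
    constructor
    intro u v h
    tauto
  loopless := by
    constructor
    intro v h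
    rcases h with ⟨h1, h2⟩ | ⟨h1, h2⟩ <;>
    · have := congrArg List.length h1
      rw [List.length_dropLast] at this
      have : v.1.length ≠ 0 := fun hh => h2 (List.length_eq_zero_iff.1 hh)
      omega

instance GTdec (t : RT) : DecidableRel (GT t).Adj := by
  intro u v
  unfold GT
  simp only
  infer_instance

def rootV (t : RT) : {l : List ℕ // l ∈ t.paths} := ⟨[], nil_mem_paths t⟩

lemma GT_adj_parent {t : RT} (v : {l : List ℕ // l ∈ t.paths}) (hne : v.1 ≠ []) :
    (GT t).Adj ⟨v.1.dropLast, dropLast_mem_paths v.2⟩ v := Or.inl ⟨rfl, hne⟩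

lemma reach_root (t : RT) : ∀ (n : ℕ) (v : {l : List ℕ // l ∈ t.paths}),
    v.1.length ≤ n → (GT t).Reachable v (rootV t) := by
  intro n
  induction n with
  | zero =>
    intro v hv
    have h0 : v.1 = [] := List.length_eq_zero_iff.1 (by omega)
    have h1 : v = rootV t := Subtype.ext h0
    rw [h1]
  | succ n ih =>
    intro v hv
    by_cases h : v.1 = []
    · have h1 : v = rootV t := Subtype.ext h
      rw [h1]
    · have h1 := (GT_adj_parent v h).symm.reachable
      refine h1.trans (ih _ ?_)
      have : v.1.length ≠ 0 := fun hh => h (List.length_eq_zero_iff.1 hh)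
      simp only [List.length_dropLast]
      omega

lemma GT_connected (t : RT) : (GT t).Connected := by
  rw [SimpleGraph.connected_iff]
  refine ⟨fun u v => ?_, ⟨rootV t⟩⟩
  exact (reach_root t _ u le_rfl).trans (reach_root t _ v le_rfl).symm

lemma prefix_dropLast {c x : List ℕ} (h : c <+: x) (hne : c ≠ x) : c <+: x.dropLast := by
  obtain ⟨s, rfl⟩ := h
  have hs : s ≠ [] := by
    intro h; apply hne; simp [h]
  rw [List.dropLast_append_of_ne_nil hs]
  exact ⟨s.dropLast, rfl⟩

lemma GT_acyclic (t : RT) : (GT t).IsAcyclic := by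
  rw [SimpleGraph.isAcyclic_iff_forall_adj_isBridge]
  have key : ∀ (c p : {l : List ℕ // l ∈ t.paths}), c.1 ≠ [] → p.1 = c.1.dropLast →
      ¬ ((GT t) \ SimpleGraph.fromEdgeSet {s(c, p)}).Reachable c p := by
    intro c p hc hp hreach
    set G' := (GT t) \ SimpleGraph.fromEdgeSet {s(c, p)} with hG'
    have pres : ∀ {x y : {l : List ℕ // l ∈ t.paths}}, G'.Walk x y → c.1 <+: x.1 → c.1 <+: y.1 := by
      intro x y w
      induction w with
      | nil => exact id
      | @cons x z y hadj w ih =>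
        intro hx
        apply ih
        have hGadj : (GT t).Adj x z ∧ ¬ (s(x, z) = s(c, p) ∧ x ≠ z) := by
          have := hadj
          rw [hG'] at this
          simp only [SimpleGraph.sdiff_adj, SimpleGraph.fromEdgeSet_adj, Set.mem_singleton_iff] at this
          exact this
        rcases hGadj.1 with ⟨h1, h2⟩ | ⟨h1, h2⟩
        · -- z is child of x
          calc c.1 <+: x.1 := hx
            _ = z.1.dropLast := h1
            _ <+: z.1 := List.dropLast_prefix z.1
        · -- z is parent of x
          by_cases hxc : x = c
          · exfalso
            apply hGadj.2
            have hz : z = p := Subtype.ext (by rw [h1, hxc, hp])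
            exact ⟨by rw [hxc, hz], (GT t).ne_of_adj hGadj.1⟩
          · have : c.1 ≠ x.1 := fun hh => hxc (Subtype.ext hh).symm
            have := prefix_dropLast hx (by exact this)
            rwa [← h1] at this
    obtain ⟨w⟩ := hreach
    have := pres w (List.prefix_refl c.1)
    rw [hp] at this
    have hlen := this.length_le
    rw [List.length_dropLast] at hlen
    have : c.1.length ≠ 0 := fun hh => hc (List.length_eq_zero_iff.1 hh)
    omega
  intro u w hadj
  rcases hadj with ⟨h1, h2⟩ | ⟨h1, h2⟩
  · -- w is the child
    rw [SimpleGraph.isBridge_iff]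
    intro hr
    exact key w u h2 h1 (by rw [Sym2.eq_swap]; exact hr.symm)
  · rw [SimpleGraph.isBridge_iff]
    exact key u w h2 h1

lemma GT_isTree (t : RT) : (GT t).IsTree := ⟨GT_connected t, GT_acyclic t⟩

lemma GT_degree (t : RT) (v : {l : List ℕ // l ∈ t.paths}) :
    (GT t).degree v = ((t.subtree v.1).chl).flen + (if v.1 = [] then 0 else 1) := by
  classical
  set ar := ((t.subtree v.1).chl).flen with har
  set pad := (if v.1 = [] then 0 else 1) with hpad
  rw [← SimpleGraph.card_neighborFinset_eq_degree]
  apply Finset.card_eq_of_bijective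
    (f := fun i _ => if hi : i < ar then
      (⟨v.1 ++ [i], (append_mem_paths_iff v.2).2 hi⟩ : {l : List ℕ // l ∈ t.paths})
      else ⟨v.1.dropLast, dropLast_mem_paths v.2⟩)
  · intro a ha
    rw [SimpleGraph.mem_neighborFinset] at ha
    rcases ha with ⟨h1, h2⟩ | ⟨h1, h2⟩
    · -- a is a child
      have hrec : a.1.dropLast ++ [a.1.getLast h2] = a.1 := List.dropLast_append_getLast h2
      set i := a.1.getLast h2 with hi
      have hav : a.1 = v.1 ++ [i] := by rw [← hrec, h1]
      have hia : i < ar := by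
        rw [har]
        exact (append_mem_paths_iff v.2).1 (by rw [← hav]; exact a.2)
      refine ⟨i, by omega, ?_⟩
      rw [dif_pos hia]
      exact Subtype.ext hav.symm
    · -- a is the parent
      have hp : pad = 1 := by rw [hpad, if_neg h2]
      refine ⟨ar, by omega, ?_⟩
      rw [dif_neg (by omega)]
      exact Subtype.ext h1.symm
  · intro i hi
    rw [SimpleGraph.mem_neighborFinset]
    by_cases h : i < ar
    · rw [dif_pos h]
      exact Or.inl ⟨(List.dropLast_concat).symm, by simp⟩
    · rw [dif_neg h]
      have hvne : v.1 ≠ [] := by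
        intro hv
        rw [hpad, if_pos hv] at hi
        omega
      exact Or.inr ⟨rfl, hvne⟩
  · intro i j hi hj heq
    by_cases h1 : i < ar <;> by_cases h2 : j < ar
    · rw [dif_pos h1, dif_pos h2] at heq
      have := congrArg Subtype.val heq
      simp only at this
      have := List.append_cancel_left this
      simpa using this
    · rw [dif_pos h1, dif_neg h2] at heq
      exfalso
      have := congrArg (fun x => x.1.length) heq
      simp only [List.length_append, List.length_dropLast, List.length_singleton] at this
      have hvne : v.1 ≠ [] := by
        intro hv
        rw [hpad, if_pos hv] at hj
        omega
      have : v.1.length ≠ 0 := fun hh => hvne (List.length_eq_zero_iff.1 hh)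
      omega
    · rw [dif_neg h1, dif_pos h2] at heq
      exfalso
      have := congrArg (fun x => x.1.length) heq
      simp only [List.length_append, List.length_dropLast, List.length_singleton] at this
      have hvne : v.1 ≠ [] := by
        intro hv
        rw [hpad, if_pos hv] at hi
        omega
      have : v.1.length ≠ 0 := fun hh => hvne (List.length_eq_zero_iff.1 hh)
      omega
    · have hp1 : pad ≤ 1 := by
        rw [hpad]
        split <;> omega
      omega

/-! ### colorings bridge -/

def extc (t : RT) (f : {l : List ℕ // l ∈ t.paths} → ℕ) : List ℕ → ℕ :=
  fun l => if h : l ∈ t.paths then f ⟨l, h⟩ else 1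

lemma extc_val (t : RT) (f : {l : List ℕ // l ∈ t.paths} → ℕ) (v : {l : List ℕ // l ∈ t.paths}) :
    extc t f v.1 = f v := by
  rw [extc, dif_pos v.2]

lemma extc_mem (t : RT) (f : {l : List ℕ // l ∈ t.paths} → ℕ) {l : List ℕ} (h : l ∈ t.paths) :
    extc t f l = f ⟨l, h⟩ := by
  rw [extc, dif_pos h]

lemma sum_extc (t : RT) (f : {l : List ℕ // l ∈ t.paths} → ℕ) :
    ∑ v, f v = ∑ l ∈ t.paths, extc t f l := by
  rw [← Finset.sum_coe_sort t.paths (extc t f)]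
  apply Finset.sum_congr rfl
  intro v _
  rw [extc_val]

lemma proper_iff (t : RT) (f : {l : List ℕ // l ∈ t.paths} → ℕ) :
    IsProperColoring (GT t) f ↔ POn t (extc t f) := by
  constructor
  · rintro ⟨h1, h2⟩
    constructor
    · intro v hv
      rw [extc_mem t f hv]
      exact h1 _
    · intro v hv hne
      rw [extc_mem t f hv, extc_mem t f (dropLast_mem_paths hv)]
      exact (h2 (GT_adj_parent ⟨v, hv⟩ hne)).symm
  · rintro ⟨h1, h2⟩
    constructor
    · intro v
      rw [← extc_val t f v]
      exact h1 _ v.2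
    · intro u w hadj huw
      rcases hadj with ⟨ha, hb⟩ | ⟨ha, hb⟩
      · have := h2 w.1 w.2 hb
        rw [← ha] at this
        rw [extc_val, extc_val] at this
        exact this huw.symm
      · have := h2 u.1 u.2 hb
        rw [← ha] at this
        rw [extc_val, extc_val] at this
        exact this huw

lemma POn_congr {t : RT} {f g : List ℕ → ℕ} (h : ∀ l ∈ t.paths, f l = g l) :
    POn t f → POn t g := by
  rintro ⟨h1, h2⟩
  constructor
  · intro v hv
    rw [← h v hv]
    exact h1 v hv
  · intro v hv hne
    rw [← h v hv, ← h _ (dropLast_mem_paths hv)]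
    exact h2 v hv hne

/-! ### chromatic sum and strength of the top tree -/

section TopGraph

variable {k D : ℕ} (hk : 2 ≤ k)

noncomputable def canonf (k D : ℕ) : {l : List ℕ // l ∈ (top k D).paths} → ℕ :=
  fun v => clab (top k D) v.1

include hk in
lemma canonf_proper : IsProperColoring (GT (top k D)) (canonf k D) := by
  rw [proper_iff]
  apply POn_congr (f := clab (top k D)) (fun l hl => by rw [extc_mem _ _ hl]; rfl)
  exact top_proper hk

include hk in
lemma canonf_sum : ∑ v, canonf k D v = (top k D).csum := by
  rw [sum_extc]
  rw [← top_canonsum hk]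
  apply Finset.sum_congr rfl
  intro l hl
  rw [extc_mem _ _ hl]
  rfl

include hk in
lemma chromSum_top : chromSum (GT (top k D)) = (top k D).csum := by
  have hmem : (top k D).csum ∈ {s | ∃ f, IsProperColoring (GT (top k D)) f ∧ ∑ v, f v = s} :=
    ⟨canonf k D, canonf_proper hk, canonf_sum hk⟩
  have hlb : ∀ s ∈ {s | ∃ f, IsProperColoring (GT (top k D)) f ∧ ∑ v, f v = s},
      (top k D).csum ≤ s := by
    rintro s ⟨f, hf, rfl⟩
    rw [sum_extc]
    exact top_low0 hk _ ((proper_iff _ f).1 hf)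
  exact le_antisymm (Nat.sInf_le hmem) (le_csInf ⟨_, hmem⟩ hlb)

include hk in
lemma image_canonf : Finset.univ.image (canonf k D) = Finset.Icc 1 k := by
  apply Finset.Subset.antisymm
  · intro c hc
    rw [Finset.mem_image] at hc
    obtain ⟨v, _, rfl⟩ := hc
    rw [Finset.mem_Icc]
    exact top_labrange hk v.1 v.2
  · intro c hc
    rw [Finset.mem_Icc] at hc
    rw [Finset.mem_image]
    by_cases hck : c = k
    · refine ⟨rootV (top k D), Finset.mem_univ _, ?_⟩
      rw [canonf, hck]
      rfl
    · obtain ⟨m, hm, hval⟩ := (top_forced hk (top_proper hk) (top_canonsum hk)).2 c hc.1 hc.2 hck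
      refine ⟨⟨[m], cons_mem_paths hm (nil_mem_paths _)⟩, Finset.mem_univ _, hval⟩

include hk in
lemma strength_top : strength (GT (top k D)) = k := by
  set S := {n | ∃ f, IsProperColoring (GT (top k D)) f ∧
    ∑ v, f v = chromSum (GT (top k D)) ∧ (Finset.univ.image f).card = n} with hS
  have hmem : k ∈ S := by
    refine ⟨canonf k D, canonf_proper hk, ?_, ?_⟩
    · rw [canonf_sum hk, chromSum_top hk]
    · rw [image_canonf hk, Nat.card_Icc]
      omega
  have hlb : ∀ n ∈ S, k ≤ n := by
    rintro n ⟨f, hf, hsum, rfl⟩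
    have hPOn : POn (top k D) (extc _ f) := (proper_iff _ f).1 hf
    have hopt : ∑ l ∈ (top k D).paths, extc _ f l = (top k D).csum := by
      rw [← sum_extc, hsum, chromSum_top hk]
    have hforce := top_forced hk hPOn hopt
    have hsub : Finset.Icc 1 k ⊆ Finset.univ.image f := by
      intro c hc
      rw [Finset.mem_Icc] at hc
      rw [Finset.mem_image]
      by_cases hck : c = k
      · refine ⟨rootV (top k D), Finset.mem_univ _, ?_⟩
        rw [← extc_val _ f (rootV (top k D))]
        rw [show (rootV (top k D)).1 = [] from rfl, hforce.1, hck]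
      · obtain ⟨m, hm, hval⟩ := hforce.2 c hc.1 hc.2 hck
        refine ⟨⟨[m], cons_mem_paths hm (nil_mem_paths _)⟩, Finset.mem_univ _, ?_⟩
        rw [← extc_val _ f ⟨[m], cons_mem_paths hm (nil_mem_paths _)⟩]
        exact hval
    have := Finset.card_le_card hsub
    rw [Nat.card_Icc] at this
    omega
  exact le_antisymm (Nat.sInf_le hmem) (le_csInf ⟨_, hmem⟩ hlb)

include hk in
lemma maxDegree_top (hD : 2 ≤ D) : (GT (top k D)).maxDegree = D + 2*k - 2 := by
  have hroot : (GT (top k D)).degree (rootV (top k D)) = D + 2*k - 2 := by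
    rw [GT_degree]
    show ((top k D).subtree []).chl.flen + 0 = _
    rw [subtree_nil]
    show (topF k D).flen + 0 = _
    rw [top_flen hk]
    omega
  apply le_antisymm
  · apply SimpleGraph.maxDegree_le_of_forall_degree_le
    intro v
    rw [GT_degree]
    by_cases h : v.1 = []
    · rw [if_pos h, h, subtree_nil]
      show (topF k D).flen + 0 ≤ _
      rw [top_flen hk]
      omega
    · rw [if_neg h]
      have := top_arity_nonroot hk v.1 v.2 h
      omega
  · rw [← hroot]
    exact SimpleGraph.degree_le_maxDegree _ _

end TopGraph

/-! ### transport along an equivalence -/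

section Transport

variable {W V : Type*} [Fintype W] [Fintype V] (e : W ≃ V) (G : SimpleGraph V)

lemma comap_adj (x y : W) : (G.comap ⇑e).Adj x y ↔ G.Adj (e x) (e y) := Iff.rfl

instance comap_decidable [DecidableRel G.Adj] : DecidableRel (G.comap ⇑e).Adj := by
  intro x y
  rw [comap_adj]
  infer_instance

lemma comap_isTree (h : G.IsTree) : (G.comap ⇑e).IsTree := by
  have hiso : G.comap ⇑e ≃g G := by
    have := SimpleGraph.Iso.comap e G
    exact this
  constructor
  · exact SimpleGraph.Connected.map hiso.symm.toHom hiso.symm.toEquiv.surjective h.isConnected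
  · intro v c hc
    exact h.IsAcyclic (c.map hiso.toHom) (hc.map (fun a b hab => hiso.injective hab))

lemma comap_neighborFinset [DecidableRel G.Adj] (x : W) :
    (G.comap ⇑e).neighborFinset x = (G.neighborFinset (e x)).map e.symm.toEmbedding := by
  ext y
  rw [SimpleGraph.mem_neighborFinset, Finset.mem_map_equiv, SimpleGraph.mem_neighborFinset]
  rw [comap_adj]
  simp

lemma comap_degree [DecidableRel G.Adj] (x : W) :
    (G.comap ⇑e).degree x = G.degree (e x) := by
  rw [← SimpleGraph.card_neighborFinset_eq_degree, ← SimpleGraph.card_neighborFinset_eq_degree,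
    comap_neighborFinset, Finset.card_map]

lemma comap_maxDegree [DecidableRel G.Adj] : (G.comap ⇑e).maxDegree = G.maxDegree := by
  apply le_antisymm
  · apply SimpleGraph.maxDegree_le_of_forall_degree_le
    intro x
    rw [comap_degree]
    exact SimpleGraph.degree_le_maxDegree _ _
  · apply SimpleGraph.maxDegree_le_of_forall_degree_le
    intro v
    have : G.degree v = (G.comap ⇑e).degree (e.symm v) := by
      rw [comap_degree, Equiv.apply_symm_apply]
    rw [this]
    exact SimpleGraph.degree_le_maxDegree _ _

lemma comap_proper_iff (f : W → ℕ) :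
    IsProperColoring (G.comap ⇑e) f ↔ IsProperColoring G (f ∘ e.symm) := by
  constructor
  · rintro ⟨h1, h2⟩
    refine ⟨fun v => h1 _, ?_⟩
    intro u v huv
    apply h2
    rw [comap_adj]
    simpa using huv
  · rintro ⟨h1, h2⟩
    refine ⟨fun w => by simpa using h1 (e w), ?_⟩
    intro u v huv
    rw [comap_adj] at huv
    have := h2 (by simpa using huv : G.Adj (e u) (e v))
    simpa using this

lemma comap_sum (f : W → ℕ) : ∑ w, f w = ∑ v, (f ∘ e.symm) v := by
  exact (Equiv.sum_comp e.symm f).symm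

lemma comap_chromSum : chromSum (G.comap ⇑e) = chromSum G := by
  unfold chromSum
  congr 1
  ext s
  constructor
  · rintro ⟨f, hf, rfl⟩
    exact ⟨f ∘ e.symm, (comap_proper_iff e G f).1 hf, (comap_sum e f).symm⟩
  · rintro ⟨g, hg, rfl⟩
    refine ⟨g ∘ e, ?_, ?_⟩
    · rw [comap_proper_iff]
      have : (g ∘ ⇑e) ∘ ⇑e.symm = g := by
        funext v
        simp
      rwa [this]
    · rw [comap_sum e (g ∘ e)]
      apply Finset.sum_congr rfl
      intro v _
      simp

lemma comap_image (f : W → ℕ) :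
    Finset.univ.image f = Finset.univ.image (f ∘ e.symm) := by
  ext c
  simp only [Finset.mem_image, Finset.mem_univ, true_and, Function.comp_apply]
  constructor
  · rintro ⟨w, rfl⟩
    exact ⟨e w, by simp⟩
  · rintro ⟨v, rfl⟩
    exact ⟨e.symm v, rfl⟩

lemma comap_strength : strength (G.comap ⇑e) = strength G := by
  unfold strength
  rw [comap_chromSum]
  congr 1
  ext n
  constructor
  · rintro ⟨f, hf, hsum, rfl⟩
    exact ⟨f ∘ e.symm, (comap_proper_iff e G f).1 hf, by rw [← comap_sum e f]; exact hsum,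
      by rw [← comap_image e f]⟩
  · rintro ⟨g, hg, hsum, rfl⟩
    refine ⟨g ∘ e, ?_, ?_, ?_⟩
    · rw [comap_proper_iff]
      have : (g ∘ ⇑e) ∘ ⇑e.symm = g := by
        funext v
        simp
      rwa [this]
    · rw [comap_sum e (g ∘ e)]
      rw [← hsum]
      apply Finset.sum_congr rfl
      intro v _
      simp
    · have hgg : (g ∘ ⇑e) ∘ ⇑e.symm = g := funext fun v => by simp
      rw [comap_image e (g ∘ e), hgg]

end Transport

open Filter in
theorem main (α : ℝ) (hα : α ∈ Set.Ioo (0 : ℝ) (1 / 2)) :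
    ∃ (c : ℕ → ℕ) (T : ∀ n : ℕ, SimpleGraph (Fin (c n)))
      (_ : ∀ n, DecidableRel (T n).Adj),
      (∀ n, (T n).IsTree) ∧
        Tendsto (fun n => (strength (T n) : ℝ) / (T n).maxDegree) atTop (nhds α) := by
  obtain ⟨hα0, hα2⟩ := hα
  have tD : ℕ → ℕ := fun n => ⌈(((n:ℝ))+3)/α⌉₊
  set tD : ℕ → ℕ := fun n => ⌈(((n:ℝ))+3)/α⌉₊ with htD
  have hcast : ∀ n : ℕ, ((n + 3 : ℕ) : ℝ) = (n : ℝ) + 3 := by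
    intro n; push_cast; ring
  have hklt : ∀ n : ℕ, (2*(n+3) : ℝ) < ((n:ℝ)+3)/α := by
    intro n
    rw [lt_div_iff₀ hα0]
    have hn : (0:ℝ) ≤ (n:ℝ) := Nat.cast_nonneg n
    nlinarith
  have htD_ge : ∀ n, 2*(n+3) + 1 ≤ tD n := by
    intro n
    have h2 : (2*(n+3) : ℕ) < tD n := by
      rw [htD]
      rw [Nat.lt_ceil]
      calc ((2*(n+3) : ℕ) : ℝ) = 2*((n:ℝ)+3) := by push_cast; ring
        _ < ((n:ℝ)+3)/α := by have := hklt n; linarith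
    omega
  set Df : ℕ → ℕ := fun n => tD n - (2*(n+3) - 2) with hDf
  have hDf2 : ∀ n, 2 ≤ Df n := by
    intro n
    have := htD_ge n
    show 2 ≤ tD n - (2*(n+3) - 2)
    omega
  set tree : ℕ → RT := fun n => top (n+3) (Df n) with htree
  set Vt : ℕ → Type := fun n => {l : List ℕ // l ∈ (tree n).paths} with hVt
  set e : ∀ n, Fin (Fintype.card (Vt n)) ≃ Vt n := fun n => (Fintype.equivFin (Vt n)).symm
    with he
  refine ⟨fun n => Fintype.card (Vt n), fun n => (GT (tree n)).comap ⇑(e n),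
    fun n => comap_decidable _ _, fun n => comap_isTree _ _ (GT_isTree _), ?_⟩
  have hk3 : ∀ n : ℕ, 2 ≤ n + 3 := by omega
  have hstr : ∀ n, strength ((GT (tree n)).comap ⇑(e n)) = n + 3 := by
    intro n
    rw [comap_strength]
    exact strength_top (hk3 n)
  have hmax : ∀ n, ((GT (tree n)).comap ⇑(e n)).maxDegree = tD n := by
    intro n
    rw [comap_maxDegree]
    show (GT (top (n+3) (Df n))).maxDegree = tD n
    rw [maxDegree_top (hk3 n) (hDf2 n)]
    have := htD_ge n
    show tD n - (2*(n+3) - 2) + 2*(n+3) - 2 = tD n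
    omega
  have heq : (fun n => (strength ((GT (tree n)).comap ⇑(e n)) : ℝ) /
      ((GT (tree n)).comap ⇑(e n)).maxDegree)
      = fun n : ℕ => (((n:ℝ)+3)) / ((tD n : ℝ)) := by
    funext n
    rw [hstr n, hmax n, hcast n]
  rw [heq]
  -- now the limit
  have hxpos : ∀ n : ℕ, (0:ℝ) < (n:ℝ) + 3 := by
    intro n
    have : (0:ℝ) ≤ (n:ℝ) := Nat.cast_nonneg n
    linarith
  have hx_tendsto : Tendsto (fun n : ℕ => (n:ℝ) + 3) atTop atTop :=
    tendsto_atTop_add_const_right _ 3 tendsto_natCast_atTop_atTop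
  have hinv_tendsto : Tendsto (fun n : ℕ => ((n:ℝ) + 3)⁻¹) atTop (nhds 0) :=
    hx_tendsto.inv_tendsto_atTop
  have hg_lb : ∀ n : ℕ, α⁻¹ ≤ (tD n : ℝ) / ((n:ℝ)+3) := by
    intro n
    have h1 : ((n:ℝ)+3)/α ≤ (tD n : ℝ) := by
      rw [htD]
      exact Nat.le_ceil _
    rw [le_div_iff₀ (hxpos n)]
    calc α⁻¹ * ((n:ℝ)+3) = ((n:ℝ)+3)/α := by rw [div_eq_mul_inv]; ring
      _ ≤ (tD n : ℝ) := h1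
  have hg_ub : ∀ n : ℕ, (tD n : ℝ) / ((n:ℝ)+3) ≤ α⁻¹ + ((n:ℝ)+3)⁻¹ := by
    intro n
    have h1 : (tD n : ℝ) < ((n:ℝ)+3)/α + 1 := by
      rw [htD]
      apply Nat.ceil_lt_add_one
      positivity
    rw [div_le_iff₀ (hxpos n)]
    have hexp : (α⁻¹ + ((n:ℝ)+3)⁻¹) * ((n:ℝ)+3) = ((n:ℝ)+3)/α + 1 := by
      field_simp
    rw [hexp]
    linarith
  have hg_tendsto : Tendsto (fun n : ℕ => (tD n : ℝ) / ((n:ℝ)+3)) atTop (nhds α⁻¹) := by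
    have hub : Tendsto (fun n : ℕ => α⁻¹ + ((n:ℝ)+3)⁻¹) atTop (nhds (α⁻¹ + 0)) :=
      tendsto_const_nhds.add hinv_tendsto
    rw [add_zero] at hub
    exact tendsto_of_tendsto_of_tendsto_of_le_of_le tendsto_const_nhds hub hg_lb hg_ub
  have hfinal : Tendsto (fun n : ℕ => ((tD n : ℝ) / ((n:ℝ)+3))⁻¹) atTop (nhds (α⁻¹)⁻¹) :=
    hg_tendsto.inv₀ (by positivity)
  rw [inv_inv] at hfinal
  convert hfinal using 2 with n
  rw [inv_div]

end TS


open Filter in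
/-- For every real `α ∈ (0, 1/2)` there is a sequence of trees whose
strength-to-maximum-degree ratio tends to `α`. -/
theorem exists_tree_sequence_ratio_tendsto (α : ℝ) (hα : α ∈ Set.Ioo (0 : ℝ) (1 / 2)) :
    ∃ (c : ℕ → ℕ) (T : ∀ n : ℕ, SimpleGraph (Fin (c n)))
      (_ : ∀ n, DecidableRel (T n).Adj),
      (∀ n, (T n).IsTree) ∧
        Tendsto (fun n => (strength (T n) : ℝ) / (T n).maxDegree) atTop (nhds α) := by
  exact TS.main α hα
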